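/- arXiv:2505.04319 — 2 statements merged into one kernel-verified Lean document; each statement's English description precedes it below -/
import Mathlib

section
/- Let f = h + conj(g) belong to the class 𝒦_H^0 and suppose that h(z) − g(z) = k(z) = z/(1 − z)² for all z ∈ 𝔻. Then f equals the half-plane harmonic mapping L; that is, h(z) = (2z − z²)/(2(1 − z)²) and g(z) = −z²/(2(1 − z)²) for all z ∈ 𝔻. -/
open Complex Metric Set
open Topology

lemma abs_deriv_le_of_re_pos {φ : ℂ → ℂ} (hφ : DifferentiableOn ℂ φ (ball 0 1))
    (hre : ∀ z ∈ ball (0:ℂ) 1, 0 < (φ z).re) {r : ℝ} (h0 : φ 0 = (r:ℂ)) :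
    ‖deriv φ 0‖ ≤ 2 * r := by
  have h0m : (0:ℂ) ∈ ball (0:ℂ) 1 := mem_ball_self one_pos
  have hr : 0 < r := by
    have := hre 0 h0m
    rwa [h0, Complex.ofReal_re] at this
  have hden : ∀ z ∈ ball (0:ℂ) 1, φ z + (r:ℂ) ≠ 0 := by
    intro z hz hc
    have : (φ z + (r:ℂ)).re > 0 := by
      simp only [Complex.add_re, Complex.ofReal_re]
      have := hre z hz; linarith
    rw [hc] at this; simp at this
  set W : ℂ → ℂ := fun z => (φ z - (r:ℂ)) / (φ z + (r:ℂ)) with hW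
  have hWd : DifferentiableOn ℂ W (ball 0 1) :=
    (hφ.sub (differentiableOn_const _)).div (hφ.add (differentiableOn_const _)) hden
  have hW0 : W 0 = 0 := by simp [hW, h0]
  have hmaps : MapsTo W (ball (0:ℂ) 1) (ball (0:ℂ) 1) := by
    intro z hz
    rw [mem_ball_zero_iff]
    have hd := hden z hz
    rw [hW]
    simp only
    rw [norm_div, div_lt_one (norm_pos_iff.mpr hd)]
    have : ‖φ z - (r:ℂ)‖ ^ 2 < ‖φ z + (r:ℂ)‖ ^ 2 := by
      rw [← Complex.normSq_eq_norm_sq,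
        ← Complex.normSq_eq_norm_sq]
      simp only [Complex.normSq_apply, Complex.add_re, Complex.sub_re, Complex.add_im,
        Complex.sub_im, Complex.ofReal_re, Complex.ofReal_im]
      have := hre z hz
      nlinarith
    nlinarith [norm_nonneg (φ z - (r:ℂ)), norm_nonneg (φ z + (r:ℂ))]
  have hWa : ‖deriv W 0‖ ≤ 1 :=
    Complex.norm_deriv_le_one_of_mapsTo_ball hWd (by rw [hW0]; exact hmaps.mono_right ball_subset_closedBall) one_pos
  have hφd : HasDerivAt φ (deriv φ 0) 0 :=
    (hφ.differentiableAt (isOpen_ball.mem_nhds h0m)).hasDerivAt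
  have hWder : HasDerivAt W (deriv φ 0 / (2 * r)) 0 := by
    have := (hφd.sub_const (r:ℂ)).div (hφd.add_const (r:ℂ)) (hden 0 h0m)
    refine this.congr_deriv ?_
    rw [h0]
    have : (r:ℂ) + r ≠ 0 := by
      intro hc
      rw [← Complex.ofReal_add] at hc
      simp only [Complex.ofReal_eq_zero] at hc
      linarith
    have hrne : (r:ℂ) ≠ 0 := by
      simp only [ne_eq, Complex.ofReal_eq_zero]; linarith
    field_simp
    ring
  rw [hWder.deriv] at hWa
  have habs2 : ‖2 * (r:ℂ)‖ = 2 * r := by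
    have : (2 * (r:ℂ)) = ((2*r : ℝ):ℂ) := by push_cast; ring
    rw [this, Complex.norm_real, Real.norm_eq_abs, abs_of_pos (by linarith)]
  rw [norm_div, habs2, div_le_one (by linarith)] at hWa
  exact hWa

lemma eq_id_of_schwarz {ψ : ℂ → ℂ} (hψ : DifferentiableOn ℂ ψ (ball 0 1))
    (hmaps : MapsTo ψ (ball (0:ℂ) 1) (ball (0:ℂ) 1)) (h0 : ψ 0 = 0)
    (h1 : deriv ψ 0 = 1) : ∀ z ∈ ball (0:ℂ) 1, ψ z = z := by
  have hmaps' : MapsTo ψ (ball (0:ℂ) 1) (ball (ψ 0) 1) := by rwa [h0]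
  have heq : ‖dslope ψ 0 0‖ = 1 / 1 := by
    rw [dslope_same, h1]; simp
  have := Complex.affine_of_mapsTo_ball_of_norm_dslope_eq_div hψ (hmaps'.mono_right ball_subset_closedBall)
    (mem_ball_self one_pos) heq
  intro z hz
  have h2 := this hz
  simp only [dslope_same, h1, h0, smul_eq_mul, mul_one, sub_zero, zero_add] at h2
  exact h2

lemma exists_clequiv (a b : ℂ) (hab : ‖b‖ < ‖a‖) :
    ∃ E : ℂ ≃L[ℝ] ℂ, ∀ w, E w = a * w + (starRingEnd ℂ) (b * w) := by
  have hD : 0 < Complex.normSq a - Complex.normSq b := by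
    have : Complex.normSq b < Complex.normSq a := by
      rw [← Complex.sq_norm, ← Complex.sq_norm]
      have hb : 0 ≤ ‖b‖ := norm_nonneg b
      nlinarith
    linarith
  set D : ℝ := Complex.normSq a - Complex.normSq b with hDdef
  have hDC : (D:ℂ) ≠ 0 := by
    simp only [ne_eq, Complex.ofReal_eq_zero]; linarith
  have hsmul : ∀ (r : ℝ) (w : ℂ), (starRingEnd ℂ) ((r:ℂ) * w) = (r:ℂ) * (starRingEnd ℂ) w := by
    intro r w; rw [map_mul, Complex.conj_ofReal]
  let L1 : ℂ →ₗ[ℝ] ℂ :=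
    { toFun := fun w => a * w + (starRingEnd ℂ) (b * w)
      map_add' := by intro x y; simp [mul_add, map_add]; ring
      map_smul' := by
        intro r x
        simp only [Complex.real_smul, RingHom.id_apply]
        rw [show b * ((r:ℂ) * x) = (r:ℂ) * (b * x) by ring, hsmul]
        ring }
  let L2 : ℂ →ₗ[ℝ] ℂ :=
    { toFun := fun v => ((starRingEnd ℂ) a * v - (starRingEnd ℂ) b * (starRingEnd ℂ) v) / (D:ℂ)
      map_add' := by intro x y; simp [map_add]; ring
      map_smul' := by
        intro r x
        simp only [Complex.real_smul, RingHom.id_apply]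
        rw [show (r:ℂ) * x = (r:ℂ) * x from rfl, hsmul]
        field_simp }
  have key1 : ∀ w, L2 (L1 w) = w := by
    intro w
    show ((starRingEnd ℂ) a * (a * w + (starRingEnd ℂ) (b * w)) -
      (starRingEnd ℂ) b * (starRingEnd ℂ) (a * w + (starRingEnd ℂ) (b * w))) / (D:ℂ) = w
    simp only [map_add, map_mul, Complex.conj_conj]
    rw [div_eq_iff hDC, hDdef, Complex.ofReal_sub]
    linear_combination w * (Complex.mul_conj a) - w * (Complex.mul_conj b)
  have key2 : ∀ v, L1 (L2 v) = v := by
    intro v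
    show a * (((starRingEnd ℂ) a * v - (starRingEnd ℂ) b * (starRingEnd ℂ) v) / (D:ℂ)) +
      (starRingEnd ℂ) (b * (((starRingEnd ℂ) a * v -
        (starRingEnd ℂ) b * (starRingEnd ℂ) v) / (D:ℂ))) = v
    simp only [map_mul, map_div₀, map_sub, Complex.conj_conj, Complex.conj_ofReal]
    rw [mul_div_assoc', mul_div_assoc', ← add_div, div_eq_iff hDC, hDdef,
      Complex.ofReal_sub]
    linear_combination v * (Complex.mul_conj a) - v * (Complex.mul_conj b)
  let e : ℂ ≃ₗ[ℝ] ℂ := LinearEquiv.ofLinear L1 L2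
    (by apply LinearMap.ext; intro v; simp [LinearMap.comp_apply, key2 v])
    (by apply LinearMap.ext; intro w; simp [LinearMap.comp_apply, key1 w])
  refine ⟨e.toContinuousLinearEquiv, ?_⟩
  intro w
  rfl

lemma isOpen_image_harmonic {h g : ℂ → ℂ}
    (Hd : DifferentiableOn ℂ h (ball 0 1)) (Gd : DifferentiableOn ℂ g (ball 0 1))
    (hsp : ∀ z ∈ ball (0:ℂ) 1, ‖deriv g z‖ < ‖deriv h z‖) :
    IsOpen ((fun z => h z + (starRingEnd ℂ) (g z)) '' ball (0:ℂ) 1) := by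
  rw [isOpen_iff_mem_nhds]
  rintro w ⟨z, hz, rfl⟩
  have hnz : ball (0:ℂ) 1 ∈ 𝓝 z := isOpen_ball.mem_nhds hz
  -- strict derivatives
  have hh : HasStrictDerivAt h (deriv h z) z :=
    ((Hd.analyticAt hnz).contDiffAt).hasStrictDerivAt one_ne_zero
  have hg : HasStrictDerivAt g (deriv g z) z :=
    ((Gd.analyticAt hnz).contDiffAt).hasStrictDerivAt one_ne_zero
  obtain ⟨E, hE⟩ := exists_clequiv (deriv h z) (deriv g z) (hsp z hz)
  have hfd : HasStrictFDerivAt (fun z => h z + (starRingEnd ℂ) (g z)) (E : ℂ →L[ℝ] ℂ) z := by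
    have h1 : HasStrictFDerivAt h
        ((ContinuousLinearMap.smulRight (1 : ℂ →L[ℂ] ℂ) (deriv h z)).restrictScalars ℝ) z :=
      hh.hasStrictFDerivAt.restrictScalars ℝ
    have h2 : HasStrictFDerivAt g
        ((ContinuousLinearMap.smulRight (1 : ℂ →L[ℂ] ℂ) (deriv g z)).restrictScalars ℝ) z :=
      hg.hasStrictFDerivAt.restrictScalars ℝ
    have h3 : HasStrictFDerivAt (fun w => (starRingEnd ℂ) (g w))
        ((Complex.conjCLE.toContinuousLinearMap).comp
          ((ContinuousLinearMap.smulRight (1 : ℂ →L[ℂ] ℂ) (deriv g z)).restrictScalars ℝ)) z :=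
      (Complex.conjCLE.toContinuousLinearMap.hasStrictFDerivAt).comp z h2
    have h4 := h1.add h3
    refine h4.congr_fderiv ?_
    symm
    apply ContinuousLinearMap.ext
    intro w
    simp only [hE, ContinuousLinearMap.add_apply, ContinuousLinearMap.coe_comp',
      Function.comp_apply, ContinuousLinearMap.coe_restrictScalars',
      ContinuousLinearMap.smulRight_apply, ContinuousLinearMap.one_apply, smul_eq_mul,
      ContinuousLinearEquiv.coe_coe, Complex.conjCLE_apply]
    rw [mul_comm, mul_comm (deriv g z) w]
  have hmap := hfd.map_nhds_eq_of_equiv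
  have himg : (fun z => h z + (starRingEnd ℂ) (g z)) '' ball (0:ℂ) 1 ∈
      Filter.map (fun z => h z + (starRingEnd ℂ) (g z)) (𝓝 z) :=
    Filter.image_mem_map hnz
  rwa [hmap] at himg

lemma mobius_re_bounds {w : ℂ} (hw : ‖w‖ < 1) :
    0 < ((1+w)/(1-w)).re ∧ ((1+w)/(1-w)).re ≤ (1 + ‖w‖)/(1 - ‖w‖) := by
  have hne : (1:ℂ) - w ≠ 0 := by
    intro hc; rw [sub_eq_zero] at hc; rw [← hc] at hw; simp at hw
  have hns : Complex.normSq w < 1 := by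
    rw [← Complex.sq_norm]
    nlinarith [norm_nonneg w]
  constructor
  · rw [Complex.div_re]
    have hpos : 0 < Complex.normSq (1 - w) := Complex.normSq_pos.mpr hne
    have hkey : (1+w).re * (1-w).re + (1+w).im * (1-w).im = 1 - Complex.normSq w := by
      simp [Complex.normSq_apply, Complex.add_re, Complex.add_im, Complex.sub_re,
        Complex.sub_im]
      ring
    rw [← add_div, hkey]
    exact div_pos (by linarith) hpos
  · have h1 : ((1+w)/(1-w)).re ≤ ‖(1+w)/(1-w)‖ := Complex.re_le_norm _
    have h2 : ‖(1+w)/(1-w)‖ ≤ (1 + ‖w‖)/(1 - ‖w‖) := by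
      rw [norm_div]
      apply div_le_div₀ (by positivity)
      · calc ‖1+w‖ ≤ ‖(1:ℂ)‖ + ‖w‖ := norm_add_le _ _
          _ = 1 + ‖w‖ := by simp
      · linarith
      · have := norm_sub_norm_le (1:ℂ) w
        simpa using this
    linarith

lemma arith_helper {a b c : ℝ} (hab1 : a^2 + b^2 = 1) (hcge : -(1/2:ℝ) ≤ c) (hcle : c ≤ 0)
    (hge : 1 ≤ 2*(a*c)) : a = -1 ∧ b = 0 ∧ c = -(1/2:ℝ) := by
  have ha2 : a^2 ≤ 1 := by nlinarith [sq_nonneg b]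
  have ha_neg : a < 0 := by nlinarith
  have ha_le : a ≤ -1 := by nlinarith [mul_le_mul_of_nonpos_left hcge (le_of_lt ha_neg)]
  have ha_eq : a = -1 := by nlinarith
  have hc_eq : c = -(1/2:ℝ) := by rw [ha_eq] at hge; nlinarith
  have hb_eq : b = 0 := by
    have : b^2 = 0 := by nlinarith
    exact pow_eq_zero_iff (by norm_num) |>.mp this
  exact ⟨ha_eq, hb_eq, hc_eq⟩

/-- The class 𝒦_H^0 of normalized sense-preserving univalent harmonic mappings
`f = h + conj g` of the unit disk onto a convex domain. -/
def KH0 (h g : ℂ → ℂ) : Prop :=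
  DifferentiableOn ℂ h (ball (0:ℂ) 1) ∧
  DifferentiableOn ℂ g (ball (0:ℂ) 1) ∧
  h 0 = 0 ∧ g 0 = 0 ∧ deriv h 0 = 1 ∧ deriv g 0 = 0 ∧
  (∀ z ∈ ball (0:ℂ) 1, ‖deriv g z‖ < ‖deriv h z‖) ∧
  Set.InjOn (fun z => h z + (starRingEnd ℂ) (g z)) (ball (0:ℂ) 1) ∧
  Convex ℝ ((fun z => h z + (starRingEnd ℂ) (g z)) '' ball (0:ℂ) 1)

set_option maxHeartbeats 2000000 in
theorem h_sub_g_eq_koebe_implies_halfplane_mapping (h g : ℂ → ℂ) (hf : KH0 h g)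
    (hk : ∀ z ∈ ball (0:ℂ) 1, h z - g z = z / (1 - z)^2) :
    ∀ z ∈ ball (0:ℂ) 1,
      h z = (2*z - z^2) / (2*(1 - z)^2) ∧ g z = -z^2 / (2*(1 - z)^2) := by
  obtain ⟨Hd, Gd, h0, g0, dh0, dg0, hsp, hinj, hconv⟩ := hf
  have h0mem : (0:ℂ) ∈ ball (0:ℂ) 1 := mem_ball_self one_pos
  -- basic nonvanishing
  have hzne : ∀ z ∈ ball (0:ℂ) 1, (1:ℂ) - z ≠ 0 := by
    intro z hz hc
    rw [mem_ball_zero_iff] at hz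
    rw [sub_eq_zero] at hc
    rw [← hc] at hz; simp at hz
  -- Koebe function derivative
  have hkd : ∀ z ∈ ball (0:ℂ) 1,
      HasDerivAt (fun w : ℂ => w / (1 - w)^2) ((1+z)/(1-z)^3) z := by
    intro z hz
    have hne := hzne z hz
    have hd1 : HasDerivAt (fun w : ℂ => (1 - w)^2) (2 * (1-z)^1 * (-1)) z := by
      exact (((hasDerivAt_id z).const_sub 1)).pow 2
    have := (hasDerivAt_id z).div hd1 (pow_ne_zero 2 hne)
    refine this.congr_deriv ?_
    simp only [id]
    field_simp
    ring
  have hdiffh : ∀ z ∈ ball (0:ℂ) 1, DifferentiableAt ℂ h z :=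
    fun z hz => Hd.differentiableAt (isOpen_ball.mem_nhds hz)
  have hdiffg : ∀ z ∈ ball (0:ℂ) 1, DifferentiableAt ℂ g z :=
    fun z hz => Gd.differentiableAt (isOpen_ball.mem_nhds hz)
  -- derivative of h - g
  have hderhg : ∀ z ∈ ball (0:ℂ) 1, deriv h z - deriv g z = (1+z)/(1-z)^3 := by
    intro z hz
    have heq : (fun w => h w - g w) =ᶠ[𝓝 z] (fun w : ℂ => w / (1 - w)^2) :=
      Filter.eventually_of_mem (isOpen_ball.mem_nhds hz) (fun w hw => hk w hw)
    have := heq.deriv_eq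
    rw [deriv_fun_sub (hdiffh z hz) (hdiffg z hz)] at this
    rw [this, (hkd z hz).deriv]
  -- F = h + g
  set F : ℂ → ℂ := fun z => h z + g z with hFdef
  have hFd : DifferentiableOn ℂ F (ball 0 1) := Hd.add Gd
  have hF0 : F 0 = 0 := by simp [hFdef, h0, g0]
  have hFderiv : ∀ z ∈ ball (0:ℂ) 1, deriv F z = deriv h z + deriv g z :=
    fun z hz => deriv_add (hdiffh z hz) (hdiffg z hz)
  have hdF0 : deriv F 0 = 1 := by rw [hFderiv 0 h0mem, dh0, dg0, add_zero]
  have hHne : ∀ z ∈ ball (0:ℂ) 1, deriv h z ≠ 0 := by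
    intro z hz hc
    have h1 := hsp z hz
    rw [hc, norm_zero] at h1
    exact absurd h1 (not_lt.mpr (norm_nonneg _))
  -- omega
  set ω : ℂ → ℂ := fun z => deriv g z / deriv h z with hωdef
  have hωd : DifferentiableOn ℂ ω (ball 0 1) := by
    have h1 : AnalyticOnNhd ℂ h (ball 0 1) :=
      (analyticOnNhd_iff_differentiableOn isOpen_ball).mpr Hd
    have h2 : AnalyticOnNhd ℂ g (ball 0 1) :=
      (analyticOnNhd_iff_differentiableOn isOpen_ball).mpr Gd
    exact (h2.deriv.differentiableOn).div (h1.deriv.differentiableOn) hHne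
  have hω0 : ω 0 = 0 := by simp [hωdef, dg0]
  have hωlt : ∀ z ∈ ball (0:ℂ) 1, ‖ω z‖ < 1 := by
    intro z hz
    rw [hωdef]
    simp only [norm_div]
    rw [div_lt_one (norm_pos_iff.mpr (hHne z hz))]
    exact hsp z hz
  have hωS : ∀ z ∈ ball (0:ℂ) 1, ‖ω z‖ ≤ ‖z‖ := by
    intro z hz
    exact Complex.norm_le_norm_of_mapsTo_ball hωd
      (fun w hw => ball_subset_closedBall (mem_ball_zero_iff.mpr (hωlt w hw))) hω0 (mem_ball_zero_iff.mp hz)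
  -- derivative formula for F
  have hFform : ∀ z ∈ ball (0:ℂ) 1,
      deriv F z = ((1+z)/(1-z)^3) * ((1 + ω z)/(1 - ω z)) := by
    intro z hz
    have hA := hHne z hz
    have hω1 : (1:ℂ) - ω z ≠ 0 := by
      intro hc
      rw [sub_eq_zero] at hc
      have := hωlt z hz
      rw [← hc] at this; simp at this
    have hone : (1:ℂ) + z ≠ 0 := by
      intro hc
      have : z = -1 := by linear_combination hc
      rw [this] at hz
      rw [mem_ball_zero_iff] at hz
      simp at hz
    have hABne : deriv h z - deriv g z ≠ 0 := by
      rw [hderhg z hz]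
      exact div_ne_zero hone (pow_ne_zero _ (hzne z hz))
    have hq1 : (1 - ω z) * deriv h z = deriv h z - deriv g z := by
      rw [hωdef]; field_simp
    have hq2 : (1 + ω z) * deriv h z = deriv h z + deriv g z := by
      rw [hωdef]; field_simp
    have hq : (1 + ω z) / (1 - ω z) = (deriv h z + deriv g z)/(deriv h z - deriv g z) := by
      rw [← hq1, ← hq2, mul_div_mul_right _ _ hA]
    rw [hFderiv z hz, ← hderhg z hz, hq, mul_comm, div_mul_cancel₀ _ hABne]
  -- real axis analysis
  set u : ℝ → ℝ := fun x => (F ((x:ℝ):ℂ)).re with hudef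
  have hxball : ∀ x ∈ Ioo (-1:ℝ) 1, ((x:ℝ):ℂ) ∈ ball (0:ℂ) 1 := by
    intro x hx
    rw [mem_ball_zero_iff, Complex.norm_real, Real.norm_eq_abs]
    exact abs_lt.mpr ⟨hx.1, hx.2⟩
  have hudiv : ∀ x ∈ Ioo (-1:ℝ) 1, HasDerivAt u ((deriv F ((x:ℝ):ℂ)).re) x := by
    intro x hx
    exact ((hFd.differentiableAt (isOpen_ball.mem_nhds (hxball x hx))).hasDerivAt).real_of_complex
  have hureal : ∀ x ∈ Ioo (-1:ℝ) 1,
      (deriv F ((x:ℝ):ℂ)).re = ((1+x)/(1-x)^3) * ((1 + ω ((x:ℝ):ℂ))/(1 - ω ((x:ℝ):ℂ))).re := by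
    intro x hx
    rw [hFform _ (hxball x hx)]
    have hcast : ((1:ℂ)+((x:ℝ):ℂ))/((1:ℂ)-((x:ℝ):ℂ))^3 = (((1+x)/(1-x)^3 : ℝ) : ℂ) := by
      push_cast; ring
    rw [hcast, Complex.re_ofReal_mul]
  have ht_pos : ∀ x ∈ Ioo (-1:ℝ) 1, 0 < (1+x)/(1-x)^3 := by
    intro x hx
    have h1 := hx.1; have h2 := hx.2
    apply div_pos (by linarith)
    have : (0:ℝ) < 1 - x := by linarith
    positivity
  have hderiv_u_pos : ∀ x ∈ Ioo (-1:ℝ) 1, 0 < (deriv F ((x:ℝ):ℂ)).re := by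
    intro x hx
    rw [hureal x hx]
    exact mul_pos (ht_pos x hx) (mobius_re_bounds (hωlt _ (hxball x hx))).1
  have hderiv_u_le : ∀ x ∈ Ioo (-1:ℝ) 1, x ≤ 0 → (deriv F ((x:ℝ):ℂ)).re ≤ 1/(1-x)^2 := by
    intro x hx hx0
    rw [hureal x hx]
    have h1 := hx.1; have h2 := hx.2
    have hb := (mobius_re_bounds (hωlt _ (hxball x hx))).2
    have habs : ‖ω ((x:ℝ):ℂ)‖ ≤ -x := by
      have := hωS _ (hxball x hx)
      rwa [Complex.norm_real, Real.norm_eq_abs, abs_of_nonpos hx0] at this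
    have h3 : ‖ω ((x:ℝ):ℂ)‖ < 1 := hωlt _ (hxball x hx)
    have h4 : (0:ℝ) ≤ ‖ω ((x:ℝ):ℂ)‖ := norm_nonneg _
    have hmono : (1 + ‖ω ((x:ℝ):ℂ)‖)/(1 - ‖ω ((x:ℝ):ℂ)‖)
        ≤ (1 - x)/(1 + x) := by
      rw [div_le_div_iff₀ (by linarith) (by linarith)]
      nlinarith
    have hq_le : ((1 + ω ((x:ℝ):ℂ))/(1 - ω ((x:ℝ):ℂ))).re ≤ (1 - x)/(1 + x) :=
      le_trans hb hmono
    calc ((1+x)/(1-x)^3) * ((1 + ω ((x:ℝ):ℂ))/(1 - ω ((x:ℝ):ℂ))).re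
        ≤ ((1+x)/(1-x)^3) * ((1 - x)/(1 + x)) :=
          mul_le_mul_of_nonneg_left hq_le (le_of_lt (ht_pos x hx))
      _ = 1/(1-x)^2 := by
          have hx1 : (1:ℝ) + x ≠ 0 := by linarith
          have hx2 : (1:ℝ) - x ≠ 0 := by linarith
          field_simp
  have hu0 : u 0 = 0 := by
    rw [hudef]
    simp only [Complex.ofReal_zero]
    rw [hF0]
    simp
  have humono : StrictMonoOn u (Ioo (-1:ℝ) 1) := by
    apply strictMonoOn_of_deriv_pos (convex_Ioo _ _)
    · intro x hx
      exact (hudiv x hx).continuousAt.continuousWithinAt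
    · intro x hx
      rw [interior_Ioo] at hx
      rw [(hudiv x hx).deriv]
      exact hderiv_u_pos x hx
  have hu_lb : ∀ x ∈ Ioo (-1:ℝ) 1, -(1/2:ℝ) < u x := by
    intro x hx
    rcases le_or_gt x 0 with hx0 | hx0
    · -- u x ≥ x/(1-x) > -1/2
      have hWge : x/(1-x) ≤ u x := by
        rcases eq_or_lt_of_le hx0 with rfl | hxneg
        · simp [hu0]
        · -- antitone argument on [x, 0]
          set W : ℝ → ℝ := fun y => u y - y/(1-y) with hWdef
          have hWd : ∀ y ∈ Ioo (-1:ℝ) 1, HasDerivAt W ((deriv F ((y:ℝ):ℂ)).re - 1/(1-y)^2) y := by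
            intro y hy
            have hy2 : (1:ℝ) - y ≠ 0 := by
              have := hy.1; have := hy.2; intro hc; linarith
            have hd2 : HasDerivAt (fun y : ℝ => y/(1-y)) (1/(1-y)^2) y := by
              have := (hasDerivAt_id y).div ((hasDerivAt_id y).const_sub 1) hy2
              refine this.congr_deriv ?_
              rw [show (1 * (1 - id y) - id y * -1) = (1:ℝ) by simp only [id]; ring]
              rfl
            exact (hudiv y hy).sub hd2
          have hanti : AntitoneOn W (Icc x 0) := by
            apply antitoneOn_of_deriv_nonpos (convex_Icc x 0)
            · intro y hy
              have hy' : y ∈ Ioo (-1:ℝ) 1 := ⟨lt_of_lt_of_le hx.1 hy.1, lt_of_le_of_lt hy.2 one_pos⟩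
              exact (hWd y hy').continuousAt.continuousWithinAt
            · intro y hy
              rw [interior_Icc] at hy
              have hy' : y ∈ Ioo (-1:ℝ) 1 := ⟨lt_trans hx.1 hy.1, lt_trans hy.2 one_pos⟩
              exact ((hWd y hy').differentiableAt).differentiableWithinAt
            · intro y hy
              rw [interior_Icc] at hy
              have hy' : y ∈ Ioo (-1:ℝ) 1 := ⟨lt_trans hx.1 hy.1, lt_trans hy.2 one_pos⟩
              rw [(hWd y hy').deriv]
              have := hderiv_u_le y hy' (le_of_lt hy.2)
              linarith
          have := hanti (left_mem_Icc.mpr hx0) (right_mem_Icc.mpr hx0) hx0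
          rw [hWdef] at this
          simp only [hu0] at this
          simp at this
          linarith [this]
      have : -(1/2:ℝ) < x/(1-x) := by
        have h1 := hx.1
        rw [lt_div_iff₀ (by linarith : (0:ℝ) < 1 - x)]
        linarith
      linarith
    · have := humono ⟨neg_lt_zero.mpr one_pos, one_pos⟩ hx hx0
      rw [hu0] at this
      linarith
  -- the infimum
  set S : Set ℝ := u '' Ioo (-1:ℝ) 1 with hSdef
  have hSne : S.Nonempty := ⟨u 0, ⟨0, ⟨neg_lt_zero.mpr one_pos, one_pos⟩, rfl⟩⟩
  have hSbdd : BddBelow S := by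
    refine ⟨-(1/2:ℝ), ?_⟩
    rintro y ⟨x, hx, rfl⟩
    exact le_of_lt (hu_lb x hx)
  set c : ℝ := sInf S with hcdef
  have hcge : -(1/2:ℝ) ≤ c := le_csInf hSne (by rintro y ⟨x, hx, rfl⟩; exact le_of_lt (hu_lb x hx))
  have hcle : c ≤ 0 := by
    rw [hcdef, ← hu0]
    exact csInf_le hSbdd ⟨0, ⟨neg_lt_zero.mpr one_pos, one_pos⟩, rfl⟩
  have hclt : ∀ x ∈ Ioo (-1:ℝ) 1, c < u x := by
    intro x hx
    have hx' : (x-1)/2 ∈ Ioo (-1:ℝ) 1 := by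
      constructor
      · have := hx.1; linarith
      · have := hx.2; linarith
    have hlt : (x-1)/2 < x := by have := hx.1; linarith
    have h1 : c ≤ u ((x-1)/2) := csInf_le hSbdd ⟨(x-1)/2, hx', rfl⟩
    have h2 : u ((x-1)/2) < u x := humono hx' hx hlt
    linarith
  -- c is not in the image
  set fm : ℂ → ℂ := fun z => h z + (starRingEnd ℂ) (g z) with hfmdef
  have hfmre : ∀ z ∈ ball (0:ℂ) 1, (fm z).re = (F z).re := by
    intro z hz
    simp [hfmdef, hFdef, Complex.add_re, Complex.conj_re]
  have hfmim : ∀ z ∈ ball (0:ℂ) 1, (fm z).im = (z/(1-z)^2).im := by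
    intro z hz
    have : (fm z).im = (h z - g z).im := by
      simp [hfmdef, Complex.add_im, Complex.conj_im, Complex.sub_im]
      ring
    rw [this, hk z hz]
  have hcnot : ((c:ℝ):ℂ) ∉ fm '' (ball (0:ℂ) 1) := by
    rintro ⟨z, hz, hfz⟩
    -- imaginary part forces z real
    have him : (z/(1-z)^2).im = 0 := by
      rw [← hfmim z hz, hfz]
      simp
    have hzim : z.im = 0 := by
      have hne2 : ((1:ℂ) - z)^2 ≠ 0 := pow_ne_zero _ (hzne z hz)
      have hns : Complex.normSq ((1 - z)^2) ≠ 0 := by simpa using Complex.normSq_pos.mpr hne2 |>.ne'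
      rw [Complex.div_im] at him
      have hkey : z.im * ((1-z)^2).re - z.re * ((1-z)^2).im
          = z.im * (1 - z.re^2 - z.im^2) := by
        simp [pow_two, Complex.mul_re, Complex.mul_im, Complex.sub_re, Complex.sub_im]
        ring
      have h5 : z.im * ((1-z)^2).re / Complex.normSq ((1-z)^2)
          - z.re * ((1-z)^2).im / Complex.normSq ((1-z)^2) = 0 := him
      rw [← sub_div, hkey] at h5
      have h6 : z.im * (1 - z.re^2 - z.im^2) = 0 := by
        rw [div_eq_zero_iff] at h5
        exact h5.resolve_right hns
      have h7 : Complex.normSq z < 1 := by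
        rw [mem_ball_zero_iff] at hz
        rw [← Complex.sq_norm]
        nlinarith [norm_nonneg z]
      rw [Complex.normSq_apply] at h7
      rcases mul_eq_zero.mp h6 with h8 | h8
      · exact h8
      · nlinarith
    have hzeq : z = ((z.re:ℝ):ℂ) := Complex.ext rfl (by simp [hzim])
    have hzre : z.re ∈ Ioo (-1:ℝ) 1 := by
      rw [mem_ball_zero_iff] at hz
      have h9 : |z.re| < 1 := lt_of_le_of_lt (Complex.abs_re_le_norm z) hz
      exact abs_lt.mp h9
    have hceq : c = u z.re := by
      have h10 : (fm z).re = c := by rw [hfz]; simp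
      rw [hfmre z hz] at h10
      rw [hudef]
      simp only
      rw [← hzeq, h10]
    exact absurd (hclt z.re hzre) (by rw [← hceq]; exact lt_irrefl c)
  -- separation
  have hΩopen : IsOpen (fm '' ball (0:ℂ) 1) := isOpen_image_harmonic Hd Gd hsp
  obtain ⟨l, hl⟩ := geometric_hahn_banach_open_point hconv hΩopen hcnot
  -- representation of l
  set a0 : ℝ := l 1 with ha0
  set b0 : ℝ := l Complex.I with hb0
  have hrep : ∀ w : ℂ, l w = a0 * w.re + b0 * w.im := by
    intro w
    have hw : w = (w.re:ℝ) • (1:ℂ) + (w.im:ℝ) • Complex.I := by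
      rw [Complex.real_smul, Complex.real_smul, mul_one]
      exact (Complex.re_add_im w).symm
    rw [hw, map_add, map_smul, map_smul]
    simp [ha0, hb0, smul_eq_mul]
    ring
  have hl0 : (0:ℝ) < l ((c:ℝ):ℂ) := by
    have h01 : (0:ℂ) ∈ fm '' ball (0:ℂ) 1 := ⟨0, h0mem, by simp [hfmdef, h0, g0]⟩
    have := hl _ h01
    rwa [map_zero] at this
  have hlc : l ((c:ℝ):ℂ) = a0 * c := by rw [hrep]; simp
  have ha0c : 0 < a0 * c := by rw [← hlc]; exact hl0
  have hn2pos : 0 < a0^2 + b0^2 := by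
    rcases eq_or_ne a0 0 with h | h
    · rw [h] at ha0c; simp at ha0c
    · positivity
  set n : ℝ := Real.sqrt (a0^2 + b0^2) with hndef
  have hnpos : 0 < n := Real.sqrt_pos.mpr hn2pos
  have hnsq : n^2 = a0^2 + b0^2 := Real.sq_sqrt (le_of_lt hn2pos)
  set a : ℝ := a0/n with hadef
  set b : ℝ := b0/n with hbdef
  have hab1 : a^2 + b^2 = 1 := by
    rw [hadef, hbdef]
    field_simp
    rw [← hnsq]
  set γ : ℝ := a * c with hγdef
  have hγpos : 0 < γ := by
    rw [hγdef, hadef, div_mul_eq_mul_div]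
    exact div_pos ha0c hnpos
  -- the holomorphic function G
  set G : ℂ → ℂ := fun z => (a:ℂ) * F z - Complex.I * (b:ℂ) * (z/(1-z)^2) with hGdef
  have hGre : ∀ z ∈ ball (0:ℂ) 1, (G z).re = (l (fm z))/n := by
    intro z hz
    have h1 : (G z).re = a * (F z).re + b * (z/(1-z)^2).im := by
      rw [hGdef]
      simp only [Complex.sub_re, Complex.re_ofReal_mul]
      have : (Complex.I * (b:ℂ) * (z/(1-z)^2)).re = - (b * (z/(1-z)^2).im) := by
        rw [mul_assoc]
        rw [Complex.I_mul_re]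
        rw [Complex.im_ofReal_mul]
      rw [this]
      ring
    rw [h1, hrep (fm z), hfmre z hz, hfmim z hz, hadef, hbdef]
    rw [div_mul_eq_mul_div, div_mul_eq_mul_div, ← add_div]
  have hGlt : ∀ z ∈ ball (0:ℂ) 1, (G z).re < γ := by
    intro z hz
    rw [hGre z hz, hγdef, hadef, div_mul_eq_mul_div]
    rw [div_lt_div_iff_of_pos_right hnpos]
    rw [← hlc]
    exact hl _ ⟨z, hz, rfl⟩
  -- Schwarz--Pick at the origin
  have hkoebe_d : DifferentiableOn ℂ (fun z : ℂ => z/(1-z)^2) (ball 0 1) := by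
    apply DifferentiableOn.div differentiableOn_id
    · exact (differentiableOn_id.const_sub 1).pow 2
    · exact fun z hz => pow_ne_zero _ (hzne z hz)
  have hGd : DifferentiableOn ℂ G (ball 0 1) := by
    rw [hGdef]
    exact (hFd.const_mul _).sub (hkoebe_d.const_mul _)
  set φ : ℂ → ℂ := fun z => ((γ:ℝ):ℂ) - G z with hφdef
  have hφd : DifferentiableOn ℂ φ (ball 0 1) := (differentiableOn_const _).sub hGd
  have hφre : ∀ z ∈ ball (0:ℂ) 1, 0 < (φ z).re := by
    intro z hz
    rw [hφdef]
    simp only [Complex.sub_re, Complex.ofReal_re]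
    linarith [hGlt z hz]
  have hG0 : G 0 = 0 := by
    rw [hGdef]
    simp [hF0]
  have hφ0 : φ 0 = ((γ:ℝ):ℂ) := by rw [hφdef]; simp [hG0]
  have hGderivAt : HasDerivAt G ((a:ℂ) - Complex.I*(b:ℂ)) 0 := by
    have h1 : HasDerivAt F 1 0 := by
      have := (hFd.differentiableAt (isOpen_ball.mem_nhds h0mem)).hasDerivAt
      rwa [hdF0] at this
    have h2 : HasDerivAt (fun z : ℂ => z/(1-z)^2) 1 0 := by
      have := hkd 0 h0mem
      simpa using this
    have h3 := (h1.const_mul ((a:ℝ):ℂ)).sub (h2.const_mul (Complex.I*((b:ℝ):ℂ)))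
    simp only [mul_one] at h3
    exact h3
  have hφderivAt : HasDerivAt φ (-((a:ℂ) - Complex.I*(b:ℂ))) 0 := hGderivAt.const_sub _
  have habsφ : ‖deriv φ 0‖ = 1 := by
    rw [hφderivAt.deriv]
    have hre : (-(((a:ℝ):ℂ) - Complex.I*((b:ℝ):ℂ))).re = -a := by simp
    have him : (-(((a:ℝ):ℂ) - Complex.I*((b:ℝ):ℂ))).im = b := by simp
    rw [Complex.norm_def, Complex.normSq_apply, hre, him]
    rw [show (-a)*(-a) + b*b = a^2+b^2 by ring, hab1, Real.sqrt_one]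
  have hγge : 1 ≤ 2*γ := by
    have := abs_deriv_le_of_re_pos hφd hφre hφ0
    rwa [habsφ] at this
  obtain ⟨ha_eq, hb_eq, hc_eq⟩ := arith_helper hab1 hcge hcle (by rw [← hγdef]; exact hγge)
  have hγeq : γ = 1/2 := by rw [hγdef, ha_eq, hc_eq]; norm_num
  -- conclusion: Re F > -1/2
  have hFre : ∀ z ∈ ball (0:ℂ) 1, -(1/2:ℝ) < (F z).re := by
    intro z hz
    have h1 := hGlt z hz
    rw [hγeq] at h1
    have h2 : (G z).re = -(F z).re := by
      rw [hGdef, ha_eq, hb_eq]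
      simp
    rw [h2] at h1
    linarith
  -- endgame: F = z/(1-z)
  set ψ : ℂ → ℂ := fun z => F z / (1 + F z) with hψdef
  have honeF : ∀ z ∈ ball (0:ℂ) 1, (1:ℂ) + F z ≠ 0 := by
    intro z hz hc
    have h1 : ((1:ℂ) + F z).re = 0 := by rw [hc]; simp
    rw [Complex.add_re, Complex.one_re] at h1
    have := hFre z hz
    linarith
  have hψd : DifferentiableOn ℂ ψ (ball 0 1) :=
    hFd.div ((differentiableOn_const _).add hFd) honeF
  have hψmaps : MapsTo ψ (ball (0:ℂ) 1) (ball (0:ℂ) 1) := by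
    intro z hz
    rw [mem_ball_zero_iff, hψdef]
    simp only
    rw [norm_div, div_lt_one (norm_pos_iff.mpr (honeF z hz))]
    have h2 : ‖F z‖^2 < ‖1 + F z‖^2 := by
      rw [← Complex.normSq_eq_norm_sq,
        ← Complex.normSq_eq_norm_sq]
      simp only [Complex.normSq_apply, Complex.add_re, Complex.add_im, Complex.one_re,
        Complex.one_im]
      have := hFre z hz
      nlinarith
    nlinarith [norm_nonneg (F z), norm_nonneg (1 + F z)]
  have hψ0 : ψ 0 = 0 := by rw [hψdef]; simp [hF0]
  have hFat : HasDerivAt F 1 0 := by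
    have := (hFd.differentiableAt (isOpen_ball.mem_nhds h0mem)).hasDerivAt
    rwa [hdF0] at this
  have hψderiv : deriv ψ 0 = 1 := by
    have h3 := hFat.div (hFat.const_add 1) (by rw [hF0]; simp : (1:ℂ) + F 0 ≠ 0)
    have h4 : (1 * (1 + F 0) - F 0 * 1) / (1 + F 0)^2 = 1 := by rw [hF0]; simp
    rw [h4] at h3
    exact h3.deriv
  have hψid := eq_id_of_schwarz hψd hψmaps hψ0 hψderiv
  have hFeq : ∀ z ∈ ball (0:ℂ) 1, F z = z/(1-z) := by
    intro z hz
    have h5 := hψid z hz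
    rw [hψdef] at h5
    simp only at h5
    rw [div_eq_iff (honeF z hz)] at h5
    rw [eq_div_iff (hzne z hz)]
    linear_combination h5
  -- final algebra
  intro z hz
  have hF := hFeq z hz
  have hK := hk z hz
  have hne := hzne z hz
  have hFzval : h z + g z = z/(1-z) := hF
  constructor
  · have e1 : h z = ((h z + g z) + (h z - g z))/2 := by ring
    rw [e1, hFzval, hK]
    field_simp
    ring
  · have e1 : g z = ((h z + g z) - (h z - g z))/2 := by ring
    rw [e1, hFzval, hK]
    field_simp
    ring
end

section
/- Let H(z) = (2z − z²)/(2(1 − z)²) on the open unit disk 𝔻. Then for every real r > 3/8, the open disk {w ∈ ℂ : |w| < r} is not contained in the image H(𝔻). Consequently, the radius 3/8 in the covering result for analytic parts of mappings in 𝒦_H^0 is sharp. -/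
open Complex Metric Set

/-- The analytic part of the half-plane harmonic mapping. -/
noncomputable def Hhp (z : ℂ) : ℂ := (2*z - z^2) / (2*(1 - z)^2)

/-- The anti-analytic part of the half-plane harmonic mapping. -/
noncomputable def Ghp (z : ℂ) : ℂ := -z^2 / (2*(1 - z)^2)

theorem covering_radius_sharp :
    ∀ r : ℝ, 3/8 < r → ¬ (ball (0:ℂ) r ⊆ Hhp '' ball (0:ℂ) 1) := by
  intro r hr hsub
  have hmem : (-(3/8) : ℂ) ∈ ball (0:ℂ) r := by
    simp only [mem_ball, dist_zero_right]
    rw [show (-(3/8) : ℂ) = ((-(3/8) : ℝ) : ℂ) by norm_num]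
    rw [Complex.norm_real]
    rw [Real.norm_eq_abs]
    rw [abs_of_nonpos (by norm_num)]
    linarith
  obtain ⟨z, hz, hEq⟩ := hsub hmem
  have hz1 : ‖z‖ < 1 := by simpa [mem_ball, Complex.dist_eq] using hz
  have hne : (1 - z) ≠ 0 := by
    intro h
    have : z = 1 := by linear_combination -h
    rw [this] at hz1; simp at hz1
  have hden : (2*(1 - z)^2 : ℂ) ≠ 0 := by
    simp [pow_eq_zero_iff, hne]
  unfold Hhp at hEq
  rw [div_eq_iff hden] at hEq
  have hpoly : (z - 3) * (z + 1) = 0 := by linear_combination (-4:ℂ) * hEq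
  rcases mul_eq_zero.mp hpoly with h | h
  · have : z = 3 := by linear_combination h
    rw [this] at hz1
    norm_num [Complex.norm_def, Complex.normSq] at hz1
  · have : z = -1 := by linear_combination h
    rw [this] at hz1
    simp at hz1
end
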